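/- arXiv:1604.08721 — 4 statements merged into one kernel-verified Lean document; each statement's English description precedes it below -/
import Mathlib

section
/- Let E be a real inner product space, k ≥ 1, and w₁,…,w_k, u ∈ E. Then ⟨v₀(w₁,…,w_k,u), u⟩ = det(Σ^{(w₁,…,w_k,u)}_{(w₁,…,w_k,u)}), i.e. the inner product of the standard control vector with u equals the Gram determinant of the family (w₁,…,w_k,u). -/
open scoped RealInnerProductSpace BigOperators
open Matrix

/-- `Σ^{(a₁,…,a_r)}_{(b₁,…,b_s)}`: the `r × s` real matrix whose `(i,j)` entry is `⟪b j, a i⟫`. -/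
noncomputable def sigmaMat {E : Type*} [NormedAddCommGroup E] [InnerProductSpace ℝ E]
    {r s : ℕ} (a : Fin r → E) (b : Fin s → E) : Matrix (Fin r) (Fin s) ℝ :=
  Matrix.of fun i j => ⟪b j, a i⟫

/-- The standard control vector `v₀(w₁,…,w_{k+1},u)`: there are `k+1` vectors `w`
(`k+1 ≥ 1` encodes the requirement that the number of `w`-vectors is at least one).
With `0`-indexing, the sign `(-1)^(i+k+1)` below is the paper's `(-1)^{i+k+1}` for
`1`-indexed `i` and `k+1` vectors. -/
noncomputable def stdControl {E : Type*} [NormedAddCommGroup E] [InnerProductSpace ℝ E]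
    {k : ℕ} (w : Fin (k + 1) → E) (u : E) : E :=
  (∑ i : Fin (k + 1),
      ((-1 : ℝ) ^ ((i : ℕ) + k + 1) *
        (sigmaMat w (Fin.snoc (w ∘ i.succAbove) u)).det) • w i) +
    (sigmaMat w w).det • u

lemma minor_last {E : Type*} [NormedAddCommGroup E] [InnerProductSpace ℝ E]
    {k : ℕ} (w : Fin (k + 1) → E) (u : E) :
    (sigmaMat (Fin.snoc w u) (Fin.snoc w u)).submatrix
      (Fin.last (k+1)).succAbove (Fin.last (k+1)).succAbove = sigmaMat w w := by
  ext p q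
  simp [sigmaMat, Fin.succAbove_last]

lemma minor_castSucc {E : Type*} [NormedAddCommGroup E] [InnerProductSpace ℝ E]
    {k : ℕ} (w : Fin (k + 1) → E) (u : E) (i : Fin (k + 1)) :
    (sigmaMat (Fin.snoc w u) (Fin.snoc w u)).submatrix
      (Fin.castSucc i).succAbove (Fin.last (k+1)).succAbove
      = (sigmaMat w (Fin.snoc (w ∘ i.succAbove) u))ᵀ := by
  ext p q
  simp only [Matrix.submatrix_apply, sigmaMat, Matrix.transpose_apply, Matrix.of_apply,
    Fin.succAbove_last, Fin.snoc_castSucc]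
  rw [real_inner_comm]
  congr 1
  induction p using Fin.lastCases with
  | last =>
    rw [Fin.succAbove_of_le_castSucc _ _
      (by exact Fin.castSucc_le_castSucc_iff.mpr (Fin.le_last _)), Fin.succ_last]
    simp
  | cast p =>
    rw [Fin.castSucc_succAbove_castSucc]
    simp [Function.comp]

/-- `⟪v₀(w,u), u⟫` equals the Gram determinant of the family `(w₁,…,w_{k+1},u)`. -/
theorem stdControl_inner_u_eq_gramDet {E : Type*} [NormedAddCommGroup E] [InnerProductSpace ℝ E]
    {k : ℕ} (w : Fin (k + 1) → E) (u : E) :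
    ⟪stdControl w u, u⟫ =
      (sigmaMat (Fin.snoc w u) (Fin.snoc w u)).det := by
  rw [Matrix.det_succ_column _ (Fin.last (k+1)), Fin.sum_univ_castSucc]
  simp only [stdControl, inner_add_left, sum_inner, real_inner_smul_left]
  congr 1
  · refine Finset.sum_congr rfl fun i _ => ?_
    rw [minor_castSucc, Matrix.det_transpose]
    have : sigmaMat (Fin.snoc w u) (Fin.snoc w u) (Fin.castSucc i) (Fin.last (k+1))
        = ⟪w i, u⟫ := by
      simp [sigmaMat, real_inner_comm]
    rw [this]
    simp only [Fin.coe_castSucc, Fin.val_last]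
    rw [Nat.add_assoc]
    ring
  · rw [minor_last]
    have : sigmaMat (Fin.snoc w u) (Fin.snoc w u) (Fin.last (k+1)) (Fin.last (k+1))
        = ⟪u, u⟫ := by simp [sigmaMat]
    rw [this]
    simp only [Fin.val_last]
    rw [show (k+1) + (k+1) = 2*(k+1) by ring, pow_mul]
    norm_num
    ring
end

section
/- (Lemma 1.1) Let E be a real inner product space, k ≥ 1, and w₁,…,w_k, u ∈ E. The following are equivalent: (i) v₀(w₁,…,w_k,u) = 0; (ii) the family (w₁,…,w_k,u) is linearly dependent over ℝ; (iii) det(Σ^{(w₁,…,w_k,u)}_{(w₁,…,w_k,u)}) = 0. -/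
open scoped RealInnerProductSpace BigOperators

/-- If the column family `b` is linearly dependent, the sigma matrix has zero determinant. -/
lemma sigmaMat_det_eq_zero_of_dep {E : Type*} [NormedAddCommGroup E] [InnerProductSpace ℝ E]
    {n : ℕ} (a b : Fin n → E) (c : Fin n → ℝ) (hc : c ≠ 0)
    (h : ∑ j, c j • b j = 0) : (sigmaMat a b).det = 0 := by
  rw [← Matrix.exists_mulVec_eq_zero_iff]
  refine ⟨c, hc, ?_⟩
  funext i
  have : ∀ j, (sigmaMat a b) i j * c j = ⟪c j • b j, a i⟫ := by
    intro j
    simp [sigmaMat, real_inner_smul_left, mul_comm]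
  simp only [Matrix.mulVec, dotProduct, Pi.zero_apply]
  rw [Finset.sum_congr rfl (fun j _ => this j), ← sum_inner, h, inner_zero_left]

/-- Gram determinant zero iff linearly dependent. -/
lemma gram_det_eq_zero_iff {E : Type*} [NormedAddCommGroup E] [InnerProductSpace ℝ E]
    {n : ℕ} (v : Fin n → E) :
    (sigmaMat v v).det = 0 ↔ ¬ LinearIndependent ℝ v := by
  constructor
  · intro hdet hli
    obtain ⟨c, hc, hmul⟩ := (Matrix.exists_mulVec_eq_zero_iff).2 hdet
    have key : ∀ i, ⟪∑ j, c j • v j, v i⟫ = 0 := by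
      intro i
      have := congrFun hmul i
      simp only [Matrix.mulVec, dotProduct, Pi.zero_apply] at this
      rw [sum_inner]
      rw [← this]
      refine Finset.sum_congr rfl fun j _ => ?_
      simp [sigmaMat, real_inner_smul_left, mul_comm]
    have hz : (∑ j, c j • v j) = 0 := by
      have : ⟪∑ j, c j • v j, ∑ j, c j • v j⟫ = 0 := by
        rw [inner_sum]
        refine Finset.sum_eq_zero fun i _ => ?_
        rw [real_inner_smul_right, key i, mul_zero]
      exact inner_self_eq_zero.mp this
    obtain ⟨i, hi⟩ := Function.ne_iff.mp hc
    exact hi (Fintype.linearIndependent_iff.mp hli c hz i)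
  · intro hdep
    rw [Fintype.not_linearIndependent_iff] at hdep
    obtain ⟨c, hsum, i, hi⟩ := hdep
    exact sigmaMat_det_eq_zero_of_dep v v c (fun h => hi (congrFun h i)) hsum

/-- The inner product of any vector with the standard control vector is a determinant. -/
lemma inner_stdControl {E : Type*} [NormedAddCommGroup E] [InnerProductSpace ℝ E]
    {k : ℕ} (w : Fin (k + 1) → E) (u : E) (x : E) :
    ⟪x, stdControl w u⟫ =
      (sigmaMat (Fin.snoc w x : Fin (k + 2) → E) (Fin.snoc w u : Fin (k + 2) → E)).det := by
  rw [Matrix.det_succ_row _ (Fin.last (k + 1))]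
  rw [Fin.sum_univ_castSucc]
  have hlast : ((sigmaMat (Fin.snoc w x : Fin (k + 2) → E) (Fin.snoc w u)).submatrix
      (Fin.last (k + 1)).succAbove (Fin.last (k + 1)).succAbove) = sigmaMat w w := by
    funext i j
    simp [sigmaMat, Matrix.submatrix, Fin.succAbove_last, Fin.snoc_castSucc]
  have hsub : ∀ i : Fin (k + 1),
      ((sigmaMat (Fin.snoc w x : Fin (k + 2) → E) (Fin.snoc w u)).submatrix
        (Fin.last (k + 1)).succAbove (Fin.castSucc i).succAbove) =
      sigmaMat w (Fin.snoc (w ∘ i.succAbove) u) := by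
    intro i
    funext p q
    simp only [Matrix.submatrix_apply, sigmaMat, Matrix.of_apply, Fin.succAbove_last,
      Fin.snoc_castSucc]
    congr 1
    refine Fin.lastCases ?_ (fun q => ?_) q
    · rw [Fin.succAbove_of_le_castSucc _ _ (Fin.castSucc_le_castSucc_iff.mpr (Fin.le_last i)),
        Fin.succ_last, Fin.snoc_last, Fin.snoc_last]
    · rw [Fin.castSucc_succAbove_castSucc, Fin.snoc_castSucc, Fin.snoc_castSucc]
      rfl
  rw [hlast]
  simp only [hsub]
  rw [stdControl, inner_add_right, inner_sum]
  congr 1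
  · refine Finset.sum_congr rfl fun i _ => ?_
    simp only [sigmaMat, Matrix.of_apply, Fin.snoc_last, Fin.snoc_castSucc, Fin.coe_castSucc,
      Fin.val_last]
    rw [real_inner_smul_right, real_inner_comm (w i) x,
      show (i : ℕ) + k + 1 = (k + 1) + (i : ℕ) by ring]
    ring
  · simp only [sigmaMat, Matrix.of_apply, Fin.snoc_last, Fin.val_last]
    rw [real_inner_smul_right, real_inner_comm u x, Even.neg_one_pow ⟨k + 1, by ring⟩]
    ring

/-- Lemma 1.1: `v₀(w,u) = 0` iff the family `(w₁,…,w_{k+1},u)` is linearly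
dependent, iff its Gram determinant vanishes. -/
theorem stdControl_eq_zero_iff_dependent_iff_gramDet_eq_zero
    {E : Type*} [NormedAddCommGroup E] [InnerProductSpace ℝ E]
    {k : ℕ} (w : Fin (k + 1) → E) (u : E) :
    (stdControl w u = 0 ↔ ¬ LinearIndependent ℝ (Fin.snoc w u : Fin (k + 2) → E)) ∧
    ((¬ LinearIndependent ℝ (Fin.snoc w u : Fin (k + 2) → E)) ↔
      (sigmaMat (Fin.snoc w u) (Fin.snoc w u)).det = 0) := by
  constructor
  · constructor
    · -- v₀ = 0 → dependent
      intro h0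
      intro hli
      -- w is independent
      have hw : LinearIndependent ℝ w := by
        have := hli.comp Fin.castSucc (Fin.castSucc_injective _)
        simpa [Function.comp, Fin.snoc_castSucc] using this
      have hd : (sigmaMat w w).det ≠ 0 := by
        intro h
        exact (gram_det_eq_zero_iff w).mp h hw
      -- express stdControl as a combination of snoc w u
      set g : Fin (k + 2) → ℝ := Fin.snoc
        (fun i : Fin (k + 1) => (-1 : ℝ) ^ ((i : ℕ) + k + 1) *
          (sigmaMat w (Fin.snoc (w ∘ i.succAbove) u)).det) ((sigmaMat w w).det) with hg
      have hsum : ∑ i : Fin (k + 2), g i • (Fin.snoc w u : Fin (k + 2) → E) i = 0 := by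
        rw [Fin.sum_univ_castSucc]
        simp only [hg, Fin.snoc_castSucc, Fin.snoc_last]
        exact h0
      have := Fintype.linearIndependent_iff.mp hli g hsum (Fin.last (k + 1))
      rw [hg] at this
      simp only [Fin.snoc_last] at this
      exact hd this
    · -- dependent → v₀ = 0
      intro hdep
      rw [Fintype.not_linearIndependent_iff] at hdep
      obtain ⟨c, hsum, i, hi⟩ := hdep
      have hc : c ≠ 0 := fun h => hi (congrFun h i)
      have key : ∀ x : E, ⟪x, stdControl w u⟫ = 0 := by
        intro x
        rw [inner_stdControl]
        exact sigmaMat_det_eq_zero_of_dep _ _ c hc hsum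
      exact inner_self_eq_zero.mp (key (stdControl w u))
  · exact (gram_det_eq_zero_iff _).symm
end

section
/- (Contravariant formulation) Let E be a real inner product space, k ≥ 1, and w₁,…,w_k, u ∈ E. Then v₀(w₁,…,w_k,u) = ∑_{i,j=1}^k (−1)^{i+j+1} det(Σ^{(w₁,…,ŵᵢ,…,w_k)}_{(w₁,…,ŵⱼ,…,w_k)}) · ⟨u, wⱼ⟩ · wᵢ + det(Σ^{(w₁,…,w_k)}_{(w₁,…,w_k)}) · u, where a hat denotes omission of the corresponding vector (and the determinant of the empty 0×0 matrix is 1). -/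
open scoped RealInnerProductSpace BigOperators

/-- contravariant formulation. With `0`-indexing, `(-1)^(i+j+1)` below is the
paper'\''s `(-1)^{i+j+1}` for `1`-indexed `i, j`; the determinant of the empty `0×0` matrix
is `1`. -/
theorem stdControl_eq_contravariant
    {E : Type*} [NormedAddCommGroup E] [InnerProductSpace ℝ E]
    {k : ℕ} (w : Fin (k + 1) → E) (u : E) :
    stdControl w u =
      (∑ i : Fin (k + 1), ∑ j : Fin (k + 1),
          ((-1 : ℝ) ^ ((i : ℕ) + (j : ℕ) + 1) *
            (sigmaMat (w ∘ i.succAbove) (w ∘ j.succAbove)).det * ⟪u, w j⟫) • w i) +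
        (sigmaMat w w).det • u := by
  unfold stdControl
  congr 1
  refine Finset.sum_congr rfl fun i _ => ?_
  rw [← Finset.sum_smul]
  congr 1
  rw [Matrix.det_succ_column _ (Fin.last k), Finset.mul_sum]
  refine Finset.sum_congr rfl fun j _ => ?_
  have hA : (sigmaMat w (Fin.snoc (w ∘ i.succAbove) u)) j (Fin.last k) = ⟪u, w j⟫ := by
    simp [sigmaMat]
  have hsub : ((sigmaMat w (Fin.snoc (w ∘ i.succAbove) u)).submatrix j.succAbove
      (Fin.last k).succAbove).det = (sigmaMat (w ∘ i.succAbove) (w ∘ j.succAbove)).det := by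
    rw [← Matrix.det_transpose (sigmaMat (w ∘ i.succAbove) (w ∘ j.succAbove))]
    congr 1
    ext r c
    simp [sigmaMat, Fin.succAbove_last, Fin.snoc_castSucc, real_inner_comm]
  rw [hA, hsub]
  have hsign : ((-1 : ℝ)) ^ ((i : ℕ) + k + 1) * (-1) ^ ((j : ℕ) + (Fin.last k : ℕ)) =
      (-1) ^ ((i : ℕ) + (j : ℕ) + 1) := by
    rw [Fin.val_last, ← pow_add]
    have h2 : (i : ℕ) + k + 1 + ((j : ℕ) + k) = ((i : ℕ) + (j : ℕ) + 1) + 2 * k := by ring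
    rw [h2, pow_add, pow_mul]
    norm_num
  rw [← mul_assoc, ← mul_assoc, hsign]
  ring
end

section
/- (Annexe, Lemma 4.2) Let X̃ be a topological space, f : X̃ → ℝ a continuous function, and S ⊆ X̃ a subset such that f(y) ≤ f(z) for every y ∈ X̃ \ S and every z ∈ S. If x ∈ S is a mountain pass point of the restriction of f to S (with the subspace topology), then x is a mountain pass point of f : X̃ → ℝ. -/
/-- A point `x` is a mountain pass point (in the sense of Katriel) of `f : X → ℝ` if for
every neighborhood `N` of `x`, the set `N ∩ {y | f y > f x}` is disconnected, i.e. it is not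
a preconnected subset (in particular it is nonempty, since the empty set is preconnected). -/
def IsMountainPassPoint {X : Type*} [TopologicalSpace X] (f : X → ℝ) (x : X) : Prop :=
  ∀ N ∈ nhds x, ¬ IsPreconnected (N ∩ {y : X | f x < f y})

/-- Annexe, Lemma 4.2: if `f : X̃ → ℝ` is continuous, `S ⊆ X̃` satisfies
`f y ≤ f z` for every `y ∈ X̃ \ S` and `z ∈ S`, and `x ∈ S` is a mountain pass point of the
restriction of `f` to `S` (with the subspace topology), then `x` is a mountain pass point
of `f : X̃ → ℝ`. -/
theorem isMountainPassPoint_of_restriction {X : Type*} [TopologicalSpace X]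
    (f : X → ℝ) (hf : Continuous f) (S : Set X)
    (hle : ∀ y ∉ S, ∀ z ∈ S, f y ≤ f z)
    (x : X) (hx : x ∈ S)
    (hmp : IsMountainPassPoint (fun y : S => f y) ⟨x, hx⟩) :
    IsMountainPassPoint f x := by
  intro N hN hpc
  have hsub : N ∩ {y : X | f x < f y} ⊆ S := by
    rintro y ⟨-, hy⟩
    by_contra hyS
    exact absurd (hle y hyS x hx) (not_le.mpr hy)
  have hN' : (Subtype.val ⁻¹' N : Set S) ∈ nhds (⟨x, hx⟩ : S) :=
    continuous_subtype_val.continuousAt.preimage_mem_nhds hN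
  refine hmp _ hN' ?_
  have himg : (Subtype.val '' ((Subtype.val ⁻¹' N : Set S) ∩ {y : S | f x < f y.1}))
      = N ∩ {y : X | f x < f y} := by
    ext y
    constructor
    · rintro ⟨⟨z, hz⟩, ⟨h1, h2⟩, rfl⟩
      exact ⟨h1, h2⟩
    · rintro ⟨h1, h2⟩
      exact ⟨⟨y, hsub ⟨h1, h2⟩⟩, ⟨h1, h2⟩, rfl⟩
  have := (Topology.IsInducing.subtypeVal (t := S)).isPreconnected_image
    (s := (Subtype.val ⁻¹' N : Set S) ∩ {y : S | f x < f y.1})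
  rw [himg] at this
  simpa using this.mp hpc
end
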